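/- Decomposition of the prototype-augmented SCL loss: for every n_w ≥ 2, the supervised contrastive loss of the prototype-augmented batch equals Σ_{i=1}^n ( n_w / (n_{y_i} + n_w − 1) ) · L_{s,i}(n_w) + Σ_{c=1}^k ( n_w / (n_c + n_w − 1) ) · L_{p,c}(n_w). -/
import Mathlib


open scoped RealInnerProductSpace
open Filter

/-- The supervised contrastive loss (SCL) of a finite family of labeled vectors
`z : ι → EuclideanSpace ℝ (Fin d)` with labels `lbl : ι → Fin k`:
`L = Σ_i (1/P_i) Σ_{j ≠ i, lbl j = lbl i} log( Σ_{ℓ ≠ i} exp(⟪z i, z ℓ⟫ − ⟪z i, z j⟫) )`,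
where `P_i` is the number of indices `j ≠ i` with `lbl j = lbl i`. -/
noncomputable def SCL {ι : Type*} [Fintype ι] [DecidableEq ι] {k d : ℕ}
    (z : ι → EuclideanSpace ℝ (Fin d)) (lbl : ι → Fin k) : ℝ :=
  ∑ i : ι,
    (1 / ((Finset.univ.filter (fun j => j ≠ i ∧ lbl j = lbl i)).card : ℝ)) *
      ∑ j ∈ Finset.univ.filter (fun j => j ≠ i ∧ lbl j = lbl i),
        Real.log (∑ ℓ ∈ Finset.univ.filter (fun ℓ => ℓ ≠ i),
          Real.exp (⟪z i, z ℓ⟫ - ⟪z i, z j⟫))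

/-- `D_i(n_w) = Σ_{ℓ ≠ i} exp⟪h_ℓ, h_i⟫ + n_w · Σ_c exp⟪w_c, h_i⟫`. -/
noncomputable def denomD {d k n : ℕ} (w : Fin k → EuclideanSpace ℝ (Fin d))
    (h : Fin n → EuclideanSpace ℝ (Fin d)) (i : Fin n) (n_w : ℕ) : ℝ :=
  (∑ ℓ ∈ Finset.univ.filter (fun ℓ => ℓ ≠ i), Real.exp ⟪h ℓ, h i⟫)
    + (n_w : ℝ) * ∑ c : Fin k, Real.exp ⟪w c, h i⟫

/-- Sample-anchor term
`L_{s,i}(n_w) = −(1/n_w) Σ_{j ≠ i, y_j = y_i} log(exp⟪h_i, h_j⟫ / D_i(n_w))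
               − log(exp⟪h_i, w_{y_i}⟫ / D_i(n_w))`. -/
noncomputable def Ls {d k n : ℕ} (w : Fin k → EuclideanSpace ℝ (Fin d))
    (h : Fin n → EuclideanSpace ℝ (Fin d)) (y : Fin n → Fin k) (i : Fin n) (n_w : ℕ) : ℝ :=
  -(1 / (n_w : ℝ)) *
      ∑ j ∈ Finset.univ.filter (fun j => j ≠ i ∧ y j = y i),
        Real.log (Real.exp ⟪h i, h j⟫ / denomD w h i n_w)
    - Real.log (Real.exp ⟪h i, w (y i)⟫ / denomD w h i n_w)

/-- `D'_c(n_w) = Σ_ℓ exp⟪h_ℓ, w_c⟫ + n_w · Σ_{c' ≠ c} exp⟪w_{c'}, w_c⟫ + (n_w − 1)·e`. -/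
noncomputable def denomD' {d k n : ℕ} (w : Fin k → EuclideanSpace ℝ (Fin d))
    (h : Fin n → EuclideanSpace ℝ (Fin d)) (c : Fin k) (n_w : ℕ) : ℝ :=
  (∑ ℓ : Fin n, Real.exp ⟪h ℓ, w c⟫)
    + (n_w : ℝ) * ∑ c' ∈ Finset.univ.filter (fun c' => c' ≠ c), Real.exp ⟪w c', w c⟫
    + ((n_w : ℝ) - 1) * Real.exp 1

/-- Prototype-anchor term
`L_{p,c}(n_w) = − Σ_{j : y_j = c} log(exp⟪w_c, h_j⟫ / D'_c(n_w))
               − (n_w − 1) · log(e / D'_c(n_w))`. -/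
noncomputable def Lp {d k n : ℕ} (w : Fin k → EuclideanSpace ℝ (Fin d))
    (h : Fin n → EuclideanSpace ℝ (Fin d)) (y : Fin n → Fin k) (c : Fin k) (n_w : ℕ) : ℝ :=
  -(∑ j ∈ Finset.univ.filter (fun j => y j = c),
      Real.log (Real.exp ⟪w c, h j⟫ / denomD' w h c n_w))
    - ((n_w : ℝ) - 1) * Real.log (Real.exp 1 / denomD' w h c n_w)


private lemma log_sum_exp_sub {ι : Type*} (s : Finset ι) (hs : s.Nonempty) (x : ι → ℝ) (b : ℝ) :
    Real.log (∑ ℓ ∈ s, Real.exp (x ℓ - b)) =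
      Real.log (∑ ℓ ∈ s, Real.exp (x ℓ)) - b := by
  have hpos : 0 < ∑ ℓ ∈ s, Real.exp (x ℓ) :=
    Finset.sum_pos (fun ℓ _ => Real.exp_pos _) hs
  simp only [Real.exp_sub, ← Finset.sum_div]
  rw [Real.log_div hpos.ne' (Real.exp_ne_zero b), Real.log_exp]

/-- **Decomposition of the prototype-augmented SCL loss.** For every `n_w ≥ 2`, the SCL loss of
the batch augmented with `n_w` copies of each prototype equals
`Σ_i (n_w / (n_{y_i} + n_w − 1)) · L_{s,i}(n_w) + Σ_c (n_w / (n_c + n_w − 1)) · L_{p,c}(n_w)`,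
where `n_c` is the number of samples with label `c`. -/
theorem scl_prototype_decomposition (d k n : ℕ) (hd : 0 < d) (hk : 2 ≤ k) (hn : 0 < n)
    (w : Fin k → EuclideanSpace ℝ (Fin d)) (hw : ∀ c, ‖w c‖ = 1)
    (h : Fin n → EuclideanSpace ℝ (Fin d)) (hh : ∀ i, ‖h i‖ = 1)
    (y : Fin n → Fin k) (n_w : ℕ) (hnw : 2 ≤ n_w) :
    SCL (Sum.elim h (fun p : Fin k × Fin n_w => w p.1))
        (Sum.elim y (fun p : Fin k × Fin n_w => p.1))
      = (∑ i : Fin n,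
          ((n_w : ℝ) /
              (((Finset.univ.filter (fun j => y j = y i)).card : ℝ) + (n_w : ℝ) - 1)) *
            Ls w h y i n_w)
        + ∑ c : Fin k,
            ((n_w : ℝ) /
                (((Finset.univ.filter (fun j => y j = c)).card : ℝ) + (n_w : ℝ) - 1)) *
              Lp w h y c n_w := by
  unfold SCL
  rw [Fintype.sum_sum_type]
  have hnwpos : (0:ℝ) < (n_w:ℝ) := by
    have : 0 < n_w := by omega
    exact_mod_cast this
  congr 1
  · -- sample anchors
    apply Finset.sum_congr rfl
    intro a _
    have hTne : (Finset.univ.filter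
        (fun ℓ : Fin n ⊕ Fin k × Fin n_w => ℓ ≠ Sum.inl a)).Nonempty := by
      refine ⟨Sum.inr (⟨0, by omega⟩, ⟨0, by omega⟩), ?_⟩
      simp
    rw [Finset.sum_congr rfl (fun j _ => log_sum_exp_sub _ hTne
      (fun ℓ => ⟪Sum.elim h (fun p : Fin k × Fin n_w => w p.1) (Sum.inl a),
        Sum.elim h (fun p : Fin k × Fin n_w => w p.1) ℓ⟫) _)]
    have hD : (∑ ℓ ∈ Finset.univ.filter
          (fun ℓ : Fin n ⊕ Fin k × Fin n_w => ℓ ≠ Sum.inl a),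
          Real.exp ⟪Sum.elim h (fun p : Fin k × Fin n_w => w p.1) (Sum.inl a),
            Sum.elim h (fun p : Fin k × Fin n_w => w p.1) ℓ⟫)
        = denomD w h a n_w := by
      rw [Finset.sum_filter, Fintype.sum_sum_type, denomD]
      congr 1
      · rw [Finset.sum_filter]
        refine Finset.sum_congr rfl fun l _ => ?_
        by_cases hl : l = a
        · simp [hl]
        · rw [real_inner_comm (h a) (h l)]; simp [hl]
      · rw [Fintype.sum_prod_type]
        simp only [Sum.elim_inl, Sum.elim_inr, ne_eq, reduceCtorEq, not_false_eq_true, if_true,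
          if_pos, Finset.sum_const, Finset.card_univ, Fintype.card_fin, nsmul_eq_mul]
        rw [Finset.mul_sum]
        exact Finset.sum_congr rfl fun c _ => by rw [real_inner_comm]
    rw [hD]
    have hDpos : 0 < denomD w h a n_w := by
      rw [← hD]
      exact Finset.sum_pos (fun ℓ _ => Real.exp_pos _) hTne
    -- positives sum split
    have hSsum : (∑ j ∈ Finset.univ.filter
          (fun j : Fin n ⊕ Fin k × Fin n_w => j ≠ Sum.inl a ∧
            Sum.elim y (fun p : Fin k × Fin n_w => p.1) j
              = Sum.elim y (fun p : Fin k × Fin n_w => p.1) (Sum.inl a)),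
          (Real.log (denomD w h a n_w)
            - ⟪Sum.elim h (fun p : Fin k × Fin n_w => w p.1) (Sum.inl a),
                Sum.elim h (fun p : Fin k × Fin n_w => w p.1) j⟫))
        = (∑ j ∈ Finset.univ.filter (fun j : Fin n => j ≠ a ∧ y j = y a),
            (Real.log (denomD w h a n_w) - ⟪h a, h j⟫))
          + (n_w : ℝ) * (Real.log (denomD w h a n_w) - ⟪h a, w (y a)⟫) := by
      rw [Finset.sum_filter, Fintype.sum_sum_type]
      congr 1
      · rw [Finset.sum_filter]
        refine Finset.sum_congr rfl fun j _ => ?_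
        simp only [Sum.elim_inl, ne_eq, Sum.inl.injEq]
      · rw [Fintype.sum_prod_type]
        simp only [Sum.elim_inl, Sum.elim_inr, ne_eq, reduceCtorEq, not_false_eq_true, true_and,
          Finset.sum_const, Finset.card_univ, Fintype.card_fin, smul_ite, smul_zero]
        rw [Finset.sum_ite_eq' Finset.univ (y a)]
        simp [nsmul_eq_mul]
    rw [hSsum]
    -- cardinality
    have hmem : a ∈ Finset.univ.filter (fun j : Fin n => y j = y a) := by simp
    have hN1 : 1 ≤ (Finset.univ.filter (fun j : Fin n => y j = y a)).card :=
      Finset.card_pos.mpr ⟨a, hmem⟩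
    have hS0 : Finset.univ.filter (fun j : Fin n => j ≠ a ∧ y j = y a)
        = (Finset.univ.filter (fun j : Fin n => y j = y a)).erase a := by
      ext j; simp [Finset.mem_erase, and_comm]
    have hcard0 : (Finset.univ.filter (fun j : Fin n => j ≠ a ∧ y j = y a)).card
        = (Finset.univ.filter (fun j : Fin n => y j = y a)).card - 1 := by
      rw [hS0, Finset.card_erase_of_mem hmem]
    have hcard : (Finset.univ.filter
          (fun j : Fin n ⊕ Fin k × Fin n_w => j ≠ Sum.inl a ∧
            Sum.elim y (fun p : Fin k × Fin n_w => p.1) j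
              = Sum.elim y (fun p : Fin k × Fin n_w => p.1) (Sum.inl a))).card
        = ((Finset.univ.filter (fun j : Fin n => y j = y a)).card - 1) + n_w := by
      rw [Finset.card_filter, Fintype.sum_sum_type]
      congr 1
      · rw [← hcard0, Finset.card_filter]
        refine Finset.sum_congr rfl fun j _ => ?_
        simp only [Sum.elim_inl, ne_eq, Sum.inl.injEq]
      · rw [Fintype.sum_prod_type]
        simp only [Sum.elim_inl, Sum.elim_inr, ne_eq, reduceCtorEq, not_false_eq_true, true_and,
          Finset.sum_const, Finset.card_univ, Fintype.card_fin, smul_ite, smul_zero]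
        rw [Finset.sum_ite_eq' Finset.univ (y a)]
        simp
    -- Ls rewriting
    rw [Ls]
    have hLs : (∑ j ∈ Finset.univ.filter (fun j : Fin n => j ≠ a ∧ y j = y a),
        Real.log (Real.exp ⟪h a, h j⟫ / denomD w h a n_w))
        = ∑ j ∈ Finset.univ.filter (fun j : Fin n => j ≠ a ∧ y j = y a),
          (⟪h a, h j⟫ - Real.log (denomD w h a n_w)) :=
      Finset.sum_congr rfl (fun j _ => by
        rw [Real.log_div (Real.exp_ne_zero _) hDpos.ne', Real.log_exp])
    rw [hLs, Real.log_div (Real.exp_ne_zero _) hDpos.ne', Real.log_exp]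
    have hflip : (∑ j ∈ Finset.univ.filter (fun j : Fin n => j ≠ a ∧ y j = y a),
        (Real.log (denomD w h a n_w) - ⟪h a, h j⟫))
        = -∑ j ∈ Finset.univ.filter (fun j : Fin n => j ≠ a ∧ y j = y a),
          (⟪h a, h j⟫ - Real.log (denomD w h a n_w)) := by
      rw [← Finset.sum_neg_distrib]
      exact Finset.sum_congr rfl (fun j _ => (neg_sub _ _).symm)
    rw [hflip, hcard]
    set N := (Finset.univ.filter (fun j : Fin n => y j = y a)).card with hNdef
    have hcast : ((N - 1 + n_w : ℕ) : ℝ) = (N:ℝ) + (n_w:ℝ) - 1 := by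
      rw [Nat.cast_add, Nat.cast_sub hN1, Nat.cast_one]; ring
    rw [hcast]
    have hMne : ((N:ℝ) + (n_w:ℝ) - 1) ≠ 0 := by
      have h1 : (1:ℝ) ≤ (N:ℝ) := by exact_mod_cast hN1
      have h2 : (2:ℝ) ≤ (n_w:ℝ) := by exact_mod_cast hnw
      nlinarith
    set t := ∑ j ∈ Finset.univ.filter (fun j : Fin n => j ≠ a ∧ y j = y a),
      (⟪h a, h j⟫ - Real.log (denomD w h a n_w))
    field_simp
    ring
  · -- prototype anchors
    rw [Fintype.sum_prod_type]
    apply Finset.sum_congr rfl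
    intro c _
    have key : ∀ m : Fin n_w,
        (1 / ((Finset.univ.filter
            (fun j : Fin n ⊕ Fin k × Fin n_w => j ≠ Sum.inr (c, m) ∧
              Sum.elim y (fun p : Fin k × Fin n_w => p.1) j
                = Sum.elim y (fun p : Fin k × Fin n_w => p.1) (Sum.inr (c, m)))).card : ℝ)) *
          ∑ j ∈ Finset.univ.filter
            (fun j : Fin n ⊕ Fin k × Fin n_w => j ≠ Sum.inr (c, m) ∧
              Sum.elim y (fun p : Fin k × Fin n_w => p.1) j
                = Sum.elim y (fun p : Fin k × Fin n_w => p.1) (Sum.inr (c, m))),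
            Real.log (∑ ℓ ∈ Finset.univ.filter
              (fun ℓ : Fin n ⊕ Fin k × Fin n_w => ℓ ≠ Sum.inr (c, m)),
              Real.exp (⟪Sum.elim h (fun p : Fin k × Fin n_w => w p.1) (Sum.inr (c, m)),
                  Sum.elim h (fun p : Fin k × Fin n_w => w p.1) ℓ⟫
                - ⟪Sum.elim h (fun p : Fin k × Fin n_w => w p.1) (Sum.inr (c, m)),
                  Sum.elim h (fun p : Fin k × Fin n_w => w p.1) j⟫))
        = (1 / (((Finset.univ.filter (fun j : Fin n => y j = c)).card : ℝ) + (n_w:ℝ) - 1)) *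
            Lp w h y c n_w := by
      intro m
      have hTne : (Finset.univ.filter
          (fun ℓ : Fin n ⊕ Fin k × Fin n_w => ℓ ≠ Sum.inr (c, m))).Nonempty := by
        refine ⟨Sum.inl ⟨0, hn⟩, ?_⟩
        simp
      rw [Finset.sum_congr rfl (fun j _ => log_sum_exp_sub _ hTne
        (fun ℓ => ⟪Sum.elim h (fun p : Fin k × Fin n_w => w p.1) (Sum.inr (c, m)),
          Sum.elim h (fun p : Fin k × Fin n_w => w p.1) ℓ⟫) _)]
      have hwc : ⟪w c, w c⟫ = (1:ℝ) := by
        rw [real_inner_self_eq_norm_mul_norm, hw c]; norm_num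
      have hset : Finset.univ.filter (fun p : Fin k × Fin n_w => p ≠ (c, m) ∧ p.1 = c)
          = {c} ×ˢ Finset.univ.erase m := by
        ext p
        simp only [Finset.mem_filter, Finset.mem_univ, true_and, Finset.mem_product,
          Finset.mem_singleton, Finset.mem_erase, ne_eq, Prod.ext_iff, not_and]
        constructor
        · rintro ⟨h1, h2⟩; exact ⟨h2, fun hm => h1 h2 hm, by trivial⟩
        · rintro ⟨h1, h2, -⟩; exact ⟨fun hc hm => h2 hm, h1⟩
      have hnw1 : 1 ≤ n_w := by omega
      have hD : (∑ ℓ ∈ Finset.univ.filter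
            (fun ℓ : Fin n ⊕ Fin k × Fin n_w => ℓ ≠ Sum.inr (c, m)),
            Real.exp ⟪Sum.elim h (fun p : Fin k × Fin n_w => w p.1) (Sum.inr (c, m)),
              Sum.elim h (fun p : Fin k × Fin n_w => w p.1) ℓ⟫)
          = denomD' w h c n_w := by
        rw [Finset.sum_filter, Fintype.sum_sum_type, denomD']
        simp only [Sum.elim_inl, Sum.elim_inr]
        have h1 : (∑ ℓ : Fin n,
            if (Sum.inl ℓ : Fin n ⊕ Fin k × Fin n_w) ≠ Sum.inr (c, m) then
              Real.exp ⟪w c, h ℓ⟫ else 0) = ∑ ℓ : Fin n, Real.exp ⟪h ℓ, w c⟫ := by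
          refine Finset.sum_congr rfl fun l _ => ?_
          rw [real_inner_comm]; simp
        have h2 : (∑ p : Fin k × Fin n_w,
            if (Sum.inr p : Fin n ⊕ Fin k × Fin n_w) ≠ Sum.inr (c, m) then
              Real.exp ⟪w c, w p.1⟫ else 0)
            = (n_w : ℝ) * ∑ c' ∈ Finset.univ.filter (fun c' => c' ≠ c),
                Real.exp ⟪w c', w c⟫ + ((n_w : ℝ) - 1) * Real.exp 1 := by
          have e1 : (∑ p : Fin k × Fin n_w,
              if (Sum.inr p : Fin n ⊕ Fin k × Fin n_w) ≠ Sum.inr (c, m) then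
                Real.exp ⟪w c, w p.1⟫ else 0)
              = ∑ p ∈ Finset.univ.erase (c, m), Real.exp ⟪w c, w p.1⟫ := by
            rw [← Finset.sum_filter]
            apply Finset.sum_congr _ (fun _ _ => rfl)
            ext p
            simp [Finset.mem_erase]
          rw [e1, Finset.sum_erase_eq_sub (Finset.mem_univ _)]
          have e2 : (∑ p : Fin k × Fin n_w, Real.exp ⟪w c, w p.1⟫)
              = (n_w : ℝ) * ∑ c' : Fin k, Real.exp ⟪w c', w c⟫ := by
            rw [Fintype.sum_prod_type]
            simp only [Finset.sum_const, Finset.card_univ, Fintype.card_fin, nsmul_eq_mul]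
            rw [Finset.mul_sum]
            exact Finset.sum_congr rfl fun c' _ => by rw [real_inner_comm]
          have e3 : (∑ c' : Fin k, Real.exp ⟪w c', w c⟫)
              = (∑ c' ∈ Finset.univ.filter (fun c' => c' ≠ c), Real.exp ⟪w c', w c⟫)
                + Real.exp 1 := by
            rw [Finset.filter_ne', ← hwc]
            exact (Finset.sum_erase_add _ _ (Finset.mem_univ c)).symm
          rw [e2, e3, hwc]
          ring
        rw [h1, h2]
        ring
      rw [hD]
      have hDpos : 0 < denomD' w h c n_w := by
        rw [← hD]
        exact Finset.sum_pos (fun ℓ _ => Real.exp_pos _) hTne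
      set L := Real.log (denomD' w h c n_w) with hLdef
      have hSsum : (∑ j ∈ Finset.univ.filter
            (fun j : Fin n ⊕ Fin k × Fin n_w => j ≠ Sum.inr (c, m) ∧
              Sum.elim y (fun p : Fin k × Fin n_w => p.1) j
                = Sum.elim y (fun p : Fin k × Fin n_w => p.1) (Sum.inr (c, m))),
            (L - ⟪Sum.elim h (fun p : Fin k × Fin n_w => w p.1) (Sum.inr (c, m)),
                Sum.elim h (fun p : Fin k × Fin n_w => w p.1) j⟫))
          = (∑ j ∈ Finset.univ.filter (fun j : Fin n => y j = c), (L - ⟪w c, h j⟫))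
            + ((n_w : ℝ) - 1) * (L - 1) := by
        rw [Finset.sum_filter, Fintype.sum_sum_type]
        congr 1
        · rw [Finset.sum_filter]
          refine Finset.sum_congr rfl fun j _ => ?_
          simp only [Sum.elim_inl, Sum.elim_inr, ne_eq, reduceCtorEq, not_false_eq_true, true_and]
        · have e1 : (∑ p : Fin k × Fin n_w,
              if ((Sum.inr p : Fin n ⊕ Fin k × Fin n_w) ≠ Sum.inr (c, m) ∧
                Sum.elim y (fun p : Fin k × Fin n_w => p.1) (Sum.inr p)
                  = Sum.elim y (fun p : Fin k × Fin n_w => p.1) (Sum.inr (c, m))) then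
                (L - ⟪Sum.elim h (fun p : Fin k × Fin n_w => w p.1) (Sum.inr (c, m)),
                  Sum.elim h (fun p : Fin k × Fin n_w => w p.1) (Sum.inr p)⟫) else 0)
              = ∑ p ∈ Finset.univ.filter (fun p : Fin k × Fin n_w => p ≠ (c, m) ∧ p.1 = c),
                  (L - ⟪w c, w p.1⟫) := by
            rw [← Finset.sum_filter]
            apply Finset.sum_congr _ (fun _ _ => rfl)
            ext p
            simp
          rw [e1, hset, Finset.sum_product, Finset.sum_singleton]
          have e2 : (∑ m' ∈ Finset.univ.erase m, (L - ⟪w c, w ((c, m') : Fin k × Fin n_w).1⟫))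
              = ∑ _m' ∈ Finset.univ.erase m, (L - 1) :=
            Finset.sum_congr rfl fun m' _ => by
              rw [show ((c, m') : Fin k × Fin n_w).1 = c from rfl, hwc]
          rw [e2, Finset.sum_const,
            Finset.card_erase_of_mem (Finset.mem_univ m), Finset.card_univ, Fintype.card_fin,
            nsmul_eq_mul, Nat.cast_sub hnw1, Nat.cast_one]
      rw [hSsum]
      have hcard : (Finset.univ.filter
            (fun j : Fin n ⊕ Fin k × Fin n_w => j ≠ Sum.inr (c, m) ∧
              Sum.elim y (fun p : Fin k × Fin n_w => p.1) j
                = Sum.elim y (fun p : Fin k × Fin n_w => p.1) (Sum.inr (c, m)))).card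
          = (Finset.univ.filter (fun j : Fin n => y j = c)).card + (n_w - 1) := by
        rw [Finset.card_filter, Fintype.sum_sum_type]
        congr 1
        · rw [Finset.card_filter]
          refine Finset.sum_congr rfl fun j _ => ?_
          simp only [Sum.elim_inl, Sum.elim_inr, ne_eq, reduceCtorEq, not_false_eq_true, true_and]
        · have e1 : (∑ p : Fin k × Fin n_w,
              if ((Sum.inr p : Fin n ⊕ Fin k × Fin n_w) ≠ Sum.inr (c, m) ∧
                Sum.elim y (fun p : Fin k × Fin n_w => p.1) (Sum.inr p)
                  = Sum.elim y (fun p : Fin k × Fin n_w => p.1) (Sum.inr (c, m))) then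
                (1:ℕ) else 0)
              = (Finset.univ.filter (fun p : Fin k × Fin n_w => p ≠ (c, m) ∧ p.1 = c)).card := by
            rw [Finset.card_filter]
            apply Finset.sum_congr rfl fun p _ => ?_
            simp
          rw [e1, hset, Finset.card_product, Finset.card_singleton,
            Finset.card_erase_of_mem (Finset.mem_univ m), Finset.card_univ, Fintype.card_fin,
            one_mul]
      rw [hcard]
      -- Lp side
      rw [Lp]
      have hLp : (∑ j ∈ Finset.univ.filter (fun j : Fin n => y j = c),
          Real.log (Real.exp ⟪w c, h j⟫ / denomD' w h c n_w))
          = ∑ j ∈ Finset.univ.filter (fun j : Fin n => y j = c),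
            (⟪w c, h j⟫ - L) :=
        Finset.sum_congr rfl (fun j _ => by
          rw [Real.log_div (Real.exp_ne_zero _) hDpos.ne', Real.log_exp, hLdef])
      rw [hLp, Real.log_div (Real.exp_ne_zero _) hDpos.ne', Real.log_exp, ← hLdef]
      have hflip : (∑ j ∈ Finset.univ.filter (fun j : Fin n => y j = c), (L - ⟪w c, h j⟫))
          = -∑ j ∈ Finset.univ.filter (fun j : Fin n => y j = c), (⟪w c, h j⟫ - L) := by
        rw [← Finset.sum_neg_distrib]
        exact Finset.sum_congr rfl (fun j _ => (neg_sub _ _).symm)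
      rw [hflip]
      have hcast : (((Finset.univ.filter (fun j : Fin n => y j = c)).card + (n_w - 1) : ℕ) : ℝ)
          = ((Finset.univ.filter (fun j : Fin n => y j = c)).card : ℝ) + (n_w : ℝ) - 1 := by
        rw [Nat.cast_add, Nat.cast_sub hnw1, Nat.cast_one]; ring
      rw [hcast]
      ring
    rw [Finset.sum_congr rfl (fun m _ => key m), Finset.sum_const, Finset.card_univ,
      Fintype.card_fin, nsmul_eq_mul]
    ring
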